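/- Let p_⟨i⟩ = p(Π∖{α_i}) be a maximal standard parabolic subalgebra and write θ = Σ_i n_i α_i for the highest root. Then the set of ad-nilpotent ideals c with n_g(c) = p_⟨i⟩, partially ordered by inclusion, is a chain, and its cardinality equals n_i. Explicitly, these ideals are the ideals with I_j = {μ ∈ Δ⁺ : [μ:α_i] ≥ j} for j = 1,…,n_i, where [μ:α_i] is the coefficient of α_i in μ. -/

import Mathlib

open scoped RealInnerProductSpace
open scoped Classical

set_option linter.unusedSectionVars false

noncomputable section

/-- Axiomatization of the root system (with a fixed base and positive system) of a
complex simple Lie algebra `g` with Cartan subalgebra `t ⊆ b`: a finite, reduced,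
crystallographic root system, invariant under its reflections, in a euclidean vector
space `V` (the real span of the roots, with a Weyl-group-invariant inner product),
together with the set `Pi` of simple roots and the set `Δpos` of positive roots. -/
structure RootSystemData (V : Type*) [NormedAddCommGroup V] [InnerProductSpace ℝ V]
    [FiniteDimensional ℝ V] where
  /-- the set of all roots -/
  Δ : Finset V
  /-- the set of simple roots -/
  Pi : Finset V
  /-- the set of positive roots -/
  Δpos : Finset V
  zero_not_mem : (0 : V) ∉ Δ
  neg_mem : ∀ ⦃α⦄, α ∈ Δ → -α ∈ Δ
  reflect_mem : ∀ ⦃α⦄, α ∈ Δ → ∀ ⦃β⦄, β ∈ Δ → β - (2 * ⟪β, α⟫ / ⟪α, α⟫) • α ∈ Δ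
  crystallographic : ∀ ⦃α⦄, α ∈ Δ → ∀ ⦃β⦄, β ∈ Δ → ∃ n : ℤ, 2 * ⟪β, α⟫ = n * ⟪α, α⟫
  reduced : ∀ ⦃α⦄, α ∈ Δ → ∀ t : ℝ, t • α ∈ Δ → t = 1 ∨ t = -1
  Pi_subset : Pi ⊆ Δpos
  Pi_indep : LinearIndependent ℝ (Subtype.val : {x : V // x ∈ Pi} → V)
  Pi_span : Submodule.span ℝ (Pi : Set V) = ⊤
  Δpos_subset : Δpos ⊆ Δ
  mem_Δpos_iff : ∀ ⦃γ⦄, γ ∈ Δ →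
    (γ ∈ Δpos ↔ ∃ c : V → ℕ, γ = ∑ α ∈ Pi, (c α : ℝ) • α)
  pos_or_neg : ∀ ⦃γ⦄, γ ∈ Δ → γ ∈ Δpos ∨ -γ ∈ Δpos

variable {V : Type*} [NormedAddCommGroup V] [InnerProductSpace ℝ V] [FiniteDimensional ℝ V]

/-- `θ` is the highest root: `θ ∈ Δ⁺` and `γ ≼ θ` for every positive root `γ`. -/
def RootSystemData.IsHighestRoot (R : RootSystemData V) (θ : V) : Prop :=
  θ ∈ R.Δpos ∧ ∀ γ ∈ R.Δpos, ∃ c : V → ℕ, θ - γ = ∑ α ∈ R.Pi, (c α : ℝ) • α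

/-- An upper ideal of the root poset `(Δ⁺, ≼)`: a subset `I ⊆ Δ⁺` such that if
`γ ∈ I`, `μ ∈ Δ⁺` and `γ + μ` is a root, then `γ + μ ∈ I`.  Upper ideals correspond
bijectively to the ad-nilpotent ideals `c = ⊕_{γ ∈ I} g_γ` of the Borel subalgebra
`b` (the ideals of `b` contained in `u = [b, b]`). -/
def RootSystemData.IsUpperIdeal (R : RootSystemData V) (I : Finset V) : Prop :=
  I ⊆ R.Δpos ∧ ∀ γ ∈ I, ∀ μ ∈ R.Δpos, γ + μ ∈ R.Δ → γ + μ ∈ I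

/-- The weight `|c| = Σ_{γ ∈ I_c} γ` of an ad-nilpotent ideal. -/
def idealWeight {V : Type*} [NormedAddCommGroup V] [InnerProductSpace ℝ V]
    [FiniteDimensional ℝ V] (I : Finset V) : V := ∑ γ ∈ I, γ

/-- The condition `g_{-α} ⊆ n_g(c)` for a simple root `α` and the ad-nilpotent ideal
`c = ⊕_{γ ∈ I} g_γ`.  Since `[g_{-α}, g_γ] = g_{γ-α}` when `γ - α` is a root,
`[g_{-α}, g_α] ⊆ t` and `[g_{-α}, g_γ] = 0` otherwise (and `γ - α ∈ Δ` with
`γ ∈ Δ⁺`, `α` simple forces `γ - α ∈ Δ⁺`), the root space `g_{-α}` normalizes `c`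
if and only if `α ∉ I` and `I` is closed under subtracting `α` inside `Δ`.
(The normalizer `n_g(c)` is the standard parabolic subalgebra generated by `b` and
those `g_{-α}`, `α ∈ Π`, satisfying this condition.) -/
def RootSystemData.NegSimpleRootInNormalizer (R : RootSystemData V) (I : Finset V)
    (α : V) : Prop :=
  α ∉ I ∧ ∀ γ ∈ I, γ - α ∈ R.Δ → γ - α ∈ I

/-!
Write `[μ : αᵢ]` for the `αᵢ`-coordinate (the level) of a positive root `μ`. An ideal `I` of the
fibre is stable under adding and subtracting simple roots `α ≠ αᵢ` inside `Δ⁺`, and since `αᵢ`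
is the only simple root that may fail to normalize it, every root of `I` has positive level.
Positive roots of one positive level are connected by such moves (take a violating pair at
minimal coordinate distance and expand `0 < ‖μ - ν‖²` in the basis `Π`), so `I` is a union of
whole levels. Every level `k ≥ 2` contains a root `μ` with `μ - αᵢ ∈ Δ⁺`, so `I`, being upward
closed, is `I_j` for its minimal level `j`. Conversely each `I_j` with `1 ≤ j ≤ n_i` lies in the
fibre, and they are pairwise distinct because, descending from `θ`, every level `1, …, n_i` occurs.
-/

namespace RootSystemData

def basis (R : RootSystemData V) : Module.Basis R.Pi ℝ V :=
  .mk R.Pi_indep (by rw [Subtype.range_coe, R.Pi_span])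

/-- The coordinate along `α` in the basis `Π` (zero when `α ∉ Π`). -/
def coord (R : RootSystemData V) (α : V) : V →ₗ[ℝ] ℝ :=
  if h : α ∈ R.Pi then R.basis.coord ⟨α, h⟩ else 0

def height (R : RootSystemData V) : V →ₗ[ℝ] ℝ := ∑ α ∈ R.Pi, R.coord α

variable {R : RootSystemData V} {αi : V}

theorem basis_apply (α : R.Pi) : R.basis α = α :=
  Module.Basis.mk_apply _ _ _

theorem coord_simple {α β : V} (hα : α ∈ R.Pi) (hβ : β ∈ R.Pi) :
    R.coord β α = if α = β then 1 else 0 := by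
  have hb : α = R.basis ⟨α, hα⟩ := (basis_apply (R := R) ⟨α, hα⟩).symm
  rw [coord, dif_pos hβ, hb, Module.Basis.coord_apply, Module.Basis.repr_self,
    Finsupp.single_apply, ← hb]
  simp only [Subtype.mk.injEq]

theorem coord_self {α : V} (hα : α ∈ R.Pi) : R.coord α α = 1 := by
  rw [coord_simple hα hα, if_pos rfl]

theorem coord_of_ne {α β : V} (hα : α ∈ R.Pi) (hβ : β ∈ R.Pi) (h : α ≠ β) :
    R.coord β α = 0 := by
  rw [coord_simple hα hβ, if_neg h]

theorem coord_sum_smul {α : V} (hα : α ∈ R.Pi) (c : V → ℝ) :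
    R.coord α (∑ β ∈ R.Pi, c β • β) = c α := by
  simp only [map_sum, map_smul, smul_eq_mul]
  rw [Finset.sum_eq_single α (fun β hβ hne => by rw [coord_of_ne hβ hα hne, mul_zero])
    (fun h => absurd hα h), coord_self hα, mul_one]

theorem sum_coord_smul (v : V) : ∑ α ∈ R.Pi, R.coord α v • α = v := by
  conv_rhs => rw [← R.basis.sum_repr v]
  rw [← Finset.sum_coe_sort R.Pi]
  refine Finset.sum_congr rfl fun α _ => ?_
  rw [coord, dif_pos α.2, Module.Basis.coord_apply, basis_apply]

theorem height_simple {α : V} (hα : α ∈ R.Pi) : R.height α = 1 := by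
  rw [height, LinearMap.sum_apply, Finset.sum_eq_single α (fun β hβ hne => coord_of_ne hα hβ hne.symm)
    (fun h => absurd hα h), coord_self hα]

theorem exists_coord_mul_inner_pos {v : V} (hv : v ≠ 0) :
    ∃ α ∈ R.Pi, 0 < R.coord α v * ⟪α, v⟫ := by
  by_contra! h
  refine hv (real_inner_self_nonpos.mp ?_)
  calc ⟪v, v⟫ = ∑ α ∈ R.Pi, R.coord α v * ⟪α, v⟫ := by
        nth_rewrite 1 [← R.sum_coord_smul v]
        simp only [sum_inner, real_inner_smul_left]
    _ ≤ 0 := Finset.sum_nonpos h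

theorem exists_coord_eq_natCast {γ : V} (hγ : γ ∈ R.Δpos) (α : V) :
    ∃ n : ℕ, R.coord α γ = n := by
  by_cases hα : α ∈ R.Pi
  · obtain ⟨c, hc⟩ := (R.mem_Δpos_iff (R.Δpos_subset hγ)).mp hγ
    exact ⟨c α, by rw [hc, coord_sum_smul hα]⟩
  · exact ⟨0, by simp [coord, hα]⟩

theorem coord_nonneg {γ : V} (hγ : γ ∈ R.Δpos) (α : V) : 0 ≤ R.coord α γ := by
  obtain ⟨n, hn⟩ := exists_coord_eq_natCast hγ α
  exact hn ▸ n.cast_nonneg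

theorem mem_Δpos_of_coord_pos {γ α : V} (hγ : γ ∈ R.Δ) (h : 0 < R.coord α γ) :
    γ ∈ R.Δpos := by
  refine (R.pos_or_neg hγ).resolve_right fun hneg => ?_
  have := coord_nonneg hneg α
  rw [map_neg] at this
  linarith

theorem exists_coord_pos {γ : V} (hγ : γ ∈ R.Δpos) : ∃ α ∈ R.Pi, 0 < R.coord α γ := by
  by_contra! h
  have hzero : γ = 0 := by
    rw [← R.sum_coord_smul γ]
    exact Finset.sum_eq_zero fun α hα => by
      rw [le_antisymm (h α hα) (coord_nonneg hγ α), zero_smul]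
  exact R.zero_not_mem (hzero ▸ R.Δpos_subset hγ)

theorem add_mem_Δpos {γ μ : V} (hγ : γ ∈ R.Δpos) (hμ : μ ∈ R.Δpos) (h : γ + μ ∈ R.Δ) :
    γ + μ ∈ R.Δpos := by
  obtain ⟨α, -, hα⟩ := exists_coord_pos hγ
  exact mem_Δpos_of_coord_pos h (α := α) (by rw [map_add]; linarith [coord_nonneg hμ α])

theorem coord_le_of_isHighestRoot {θ γ : V} (hθ : R.IsHighestRoot θ) (hγ : γ ∈ R.Δpos)
    {α : V} (hα : α ∈ R.Pi) : R.coord α γ ≤ R.coord α θ := by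
  obtain ⟨c, hc⟩ := hθ.2 γ hγ
  have := congrArg (R.coord α) hc
  rw [map_sub, coord_sum_smul hα] at this
  linarith [(c α).cast_nonneg (α := ℝ)]

theorem inner_self_pos {α : V} (hα : α ∈ R.Δ) : 0 < ⟪α, α⟫ :=
  real_inner_self_pos.mpr fun h => R.zero_not_mem (h ▸ hα)

/-- If both Cartan integers `2⟪β, α⟫/⟪α, α⟫` and `2⟪α, β⟫/⟪β, β⟫` were at least `2`, then
`‖β - α‖² ≤ 0`; so one of them is `1`, and the corresponding reflection gives `β - α`. -/
theorem sub_mem_of_inner_pos {α β : V} (hα : α ∈ R.Δ) (hβ : β ∈ R.Δ) (hpos : 0 < ⟪β, α⟫)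
    (hne : β ≠ α) : β - α ∈ R.Δ := by
  obtain ⟨n, hn⟩ := R.crystallographic hα hβ
  obtain ⟨m, hm⟩ := R.crystallographic hβ hα
  have hαα := inner_self_pos hα
  have hββ := inner_self_pos hβ
  rw [real_inner_comm] at hm
  rcases eq_or_ne n 1 with rfl | hn1
  · have hrefl := R.reflect_mem hα hβ
    rwa [hn, Int.cast_one, one_mul, div_self hαα.ne', one_smul] at hrefl
  rcases eq_or_ne m 1 with rfl | hm1
  · have hrefl := R.reflect_mem hβ hα
    rw [real_inner_comm, hm, Int.cast_one, one_mul, div_self hββ.ne', one_smul] at hrefl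
    simpa using R.neg_mem hrefl
  have two_le {k : ℤ} {a : ℝ} (ha : 0 < a) (hk : 2 * ⟪β, α⟫ = k * a) (hk1 : k ≠ 1) :
      2 * a ≤ 2 * ⟪β, α⟫ := by
    have : (0 : ℝ) < k := pos_of_mul_pos_left (by rw [← hk]; linarith) ha.le
    have : 0 < k := by exact_mod_cast this
    have : (2 : ℝ) ≤ k := by exact_mod_cast (show (2 : ℤ) ≤ k by omega)
    nlinarith
  have hα' := two_le hαα hn hn1
  have hβ' := two_le hββ hm hm1
  have : ⟪β - α, β - α⟫ ≤ 0 := by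
    rw [inner_sub_sub_self, real_inner_comm β α]
    linarith
  exact absurd (sub_eq_zero.mp (real_inner_self_nonpos.mp this)) hne

theorem add_mem_of_inner_neg {α β : V} (hα : α ∈ R.Δ) (hβ : β ∈ R.Δ) (hneg : ⟪β, α⟫ < 0)
    (hne : β ≠ -α) : β + α ∈ R.Δ := by
  simpa using sub_mem_of_inner_pos (R.neg_mem hα) hβ (by rwa [inner_neg_right, neg_pos]) hne

theorem sub_mem_Δpos {γ α : V} (hγ : γ ∈ R.Δpos) (hα : α ∈ R.Pi) (hne : γ ≠ α)
    (hsub : γ - α ∈ R.Δ) : γ - α ∈ R.Δpos := by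
  by_contra hneg
  have hoff : ∀ β ∈ R.Pi, β ≠ α → R.coord β γ = 0 := fun β hβ hβα =>
    (coord_nonneg hγ β).antisymm' <| not_lt.mp fun hpos => hneg <|
      mem_Δpos_of_coord_pos hsub (α := β) (by rwa [map_sub, coord_of_ne hα hβ hβα.symm, sub_zero])
  have hγα : γ = R.coord α γ • α := by
    nth_rewrite 1 [← R.sum_coord_smul γ]
    exact Finset.sum_eq_single α (fun β hβ hβα => by rw [hoff β hβ hβα, zero_smul])
      (fun h => absurd hα h)
  rcases R.reduced (R.Δpos_subset (R.Pi_subset hα)) _ (hγα ▸ R.Δpos_subset hγ) with h | h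
  · exact hne (by rw [hγα, h, one_smul])
  · linarith [coord_nonneg hγ α]

theorem exists_sub_simple_mem_Δpos {γ : V} (hγ : γ ∈ R.Δpos) (hγPi : γ ∉ R.Pi) :
    ∃ α ∈ R.Pi, γ - α ∈ R.Δpos := by
  have hγ0 : γ ≠ 0 := fun h => R.zero_not_mem (h ▸ R.Δpos_subset hγ)
  obtain ⟨α, hα, hmul⟩ := exists_coord_mul_inner_pos hγ0
  have hne : γ ≠ α := fun h => hγPi (h ▸ hα)
  have hinner : 0 < ⟪γ, α⟫ := real_inner_comm α γ ▸ pos_of_mul_pos_right hmul (coord_nonneg hγ α)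
  exact ⟨α, hα, sub_mem_Δpos hγ hα hne <|
    sub_mem_of_inner_pos (R.Δpos_subset (R.Pi_subset hα)) (R.Δpos_subset hγ) hinner hne⟩

/-- A root of minimal height among the positive roots of a given `αi`-level `≥ 2` is not simple,
so some simple root can be subtracted from it; any simple root other than `αi` would lower the
height without changing the level. -/
theorem exists_sub_mem_Δpos_of_two_le_coord (hαi : αi ∈ R.Pi) {γ : V} (hγ : γ ∈ R.Δpos)
    (hγ2 : 2 ≤ R.coord αi γ) :
    ∃ μ ∈ R.Δpos, R.coord αi μ = R.coord αi γ ∧ μ - αi ∈ R.Δpos := by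
  obtain ⟨μ, hμS, hmin⟩ := (R.Δpos.filter fun μ => R.coord αi μ = R.coord αi γ).exists_min_image
    R.height ⟨γ, Finset.mem_filter.mpr ⟨hγ, rfl⟩⟩
  obtain ⟨hμ, hμγ⟩ := Finset.mem_filter.mp hμS
  have hμPi : μ ∉ R.Pi := fun h => by
    rw [coord_simple h hαi] at hμγ
    split_ifs at hμγ <;> linarith
  obtain ⟨α, hα, hsub⟩ := exists_sub_simple_mem_Δpos hμ hμPi
  refine ⟨μ, hμ, hμγ, ?_⟩
  by_cases hααi : α = αi
  · exact hααi ▸ hsub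
  have := hmin (μ - α) <| Finset.mem_filter.mpr
    ⟨hsub, by rw [map_sub, coord_of_ne hα hαi hααi, sub_zero, hμγ]⟩
  rw [map_sub, height_simple hα] at this
  linarith

theorem exists_mem_Δpos_coord_eq (hαi : αi ∈ R.Pi) {θ : V} (hθ : θ ∈ R.Δpos) {k : ℕ}
    (hk : 1 ≤ k) (hkθ : (k : ℝ) ≤ R.coord αi θ) : ∃ μ ∈ R.Δpos, R.coord αi μ = k := by
  obtain ⟨n, hn⟩ := exists_coord_eq_natCast hθ αi
  rw [hn, Nat.cast_le] at hkθ
  induction hkθ using Nat.decreasingInduction with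
  | self => exact ⟨θ, hθ, hn⟩
  | of_succ k hkn ih =>
    obtain ⟨μ, hμ, hμk⟩ := ih (by omega)
    have hk' : (1 : ℝ) ≤ k := by exact_mod_cast hk
    obtain ⟨μ', -, hμ'k, hsub⟩ :=
      exists_sub_mem_Δpos_of_two_le_coord hαi hμ (by rw [hμk]; push_cast; linarith)
    exact ⟨μ' - αi, hsub, by rw [map_sub, coord_self hαi, hμ'k, hμk]; push_cast; ring⟩

def coordDist (R : RootSystemData V) (μ ν : V) : ℝ := ∑ β ∈ R.Pi, |R.coord β μ - R.coord β ν|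

theorem coordDist_comm (μ ν : V) : R.coordDist μ ν = R.coordDist ν μ := by
  simp only [coordDist, abs_sub_comm]

theorem coordDist_lt {α μ μ' ν : V} (hα : α ∈ R.Pi)
    (hoff : ∀ β ∈ R.Pi, β ≠ α → R.coord β μ' = R.coord β μ)
    (hlt : |R.coord α μ' - R.coord α ν| < |R.coord α μ - R.coord α ν|) :
    R.coordDist μ' ν < R.coordDist μ ν := by
  refine Finset.sum_lt_sum (fun β hβ => ?_) ⟨α, hα, hlt⟩
  rcases eq_or_ne β α with rfl | hβα
  · exact hlt.le
  · rw [hoff β hβ hβα]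

/-- The step is `μ' = μ ± α`, moving the `α`-coordinate of `μ` towards that of `ν`; the sign of
`⟪α, μ⟫` makes `μ ± α` a root. -/
theorem exists_step_toward (hαi : αi ∈ R.Pi) {P : V → Prop}
    (hP : ∀ α ∈ R.Pi, α ≠ αi → ∀ μ ∈ R.Δpos, μ + α ∈ R.Δ → (P μ ↔ P (μ + α)))
    {μ ν α : V} (hμ : μ ∈ R.Δpos) (hμαi : 0 < R.coord αi μ) (hν : ν ∈ R.Δpos)
    (hα : α ∈ R.Pi) (hααi : α ≠ αi) (hmul : 0 < (R.coord α μ - R.coord α ν) * ⟪α, μ⟫) :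
    ∃ μ' ∈ R.Δpos, R.coord αi μ' = R.coord αi μ ∧ (P μ' ↔ P μ) ∧
      R.coordDist μ' ν < R.coordDist μ ν := by
  obtain ⟨m, hm⟩ := exists_coord_eq_natCast hμ α
  obtain ⟨n, hn⟩ := exists_coord_eq_natCast hν α
  have hαΔ := R.Δpos_subset (R.Pi_subset hα)
  have hμΔ := R.Δpos_subset hμ
  have hαi_α : R.coord αi α = 0 := coord_of_ne hα hαi hααi
  rw [hm, hn, real_inner_comm] at hmul
  rcases lt_or_gt_of_ne (show (m : ℝ) - n ≠ 0 by rintro h; simp [h] at hmul) with hlt | hgt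
  · have hmn : (m : ℝ) + 1 ≤ n := by exact_mod_cast (show m < n by exact_mod_cast sub_neg.mp hlt)
    have hadd := add_mem_of_inner_neg hαΔ hμΔ (neg_of_mul_pos_right hmul hlt.le) fun h => by
      linarith [coord_nonneg hμ α, show R.coord α μ = -1 by rw [h, map_neg, coord_self hα]]
    refine ⟨μ + α, mem_Δpos_of_coord_pos hadd (α := αi) (by rwa [map_add, hαi_α, add_zero]),
      by rw [map_add, hαi_α, add_zero], (hP α hα hααi μ hμ hadd).symm,
      coordDist_lt hα (fun β hβ hβα => by rw [map_add, coord_of_ne hα hβ hβα.symm, add_zero]) ?_⟩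
    rw [map_add, coord_self hα, hm, hn, abs_of_nonpos (by linarith), abs_of_neg hlt]
    linarith
  · have hmn : (n : ℝ) + 1 ≤ m := by exact_mod_cast (show n < m by exact_mod_cast sub_pos.mp hgt)
    have hne : μ ≠ α := fun h => by rw [h, hαi_α] at hμαi; exact hμαi.false
    have hsub := sub_mem_of_inner_pos hαΔ hμΔ (pos_of_mul_pos_right hmul hgt.le) hne
    have hμ' := mem_Δpos_of_coord_pos hsub (α := αi) (by rwa [map_sub, hαi_α, sub_zero])
    refine ⟨μ - α, hμ', by rw [map_sub, hαi_α, sub_zero],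
      by simpa using hP α hα hααi (μ - α) hμ' (by simpa using hμΔ),
      coordDist_lt hα (fun β hβ hβα => by rw [map_sub, coord_of_ne hα hβ hβα.symm, sub_zero]) ?_⟩
    rw [map_sub, coord_self hα, hm, hn, abs_of_nonneg (by linarith), abs_of_pos hgt]
    linarith

/-- Positive roots of the same positive `αi`-level are connected by steps along simple roots
other than `αi`: a pair violating the claim at minimal `coordDist` has `μ ≠ ν`, and expanding
`0 < ‖μ - ν‖²` in the basis `Π` yields a step of `μ` or of `ν` that shortens it. -/
theorem iff_of_coord_eq (hαi : αi ∈ R.Pi) {P : V → Prop}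
    (hP : ∀ α ∈ R.Pi, α ≠ αi → ∀ μ ∈ R.Δpos, μ + α ∈ R.Δ → (P μ ↔ P (μ + α)))
    {μ ν : V} (hμ : μ ∈ R.Δpos) (hν : ν ∈ R.Δpos) (hlevel : R.coord αi μ = R.coord αi ν)
    (hpos : 0 < R.coord αi μ) : P μ ↔ P ν := by
  by_contra hbad
  set L := R.coord αi μ
  obtain ⟨⟨μ, ν⟩, hS, hmin⟩ := ((R.Δpos ×ˢ R.Δpos).filter fun p : V × V =>
      R.coord αi p.1 = L ∧ R.coord αi p.2 = L ∧ ¬(P p.1 ↔ P p.2)).exists_min_image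
    (fun p => R.coordDist p.1 p.2)
    ⟨(μ, ν), Finset.mem_filter.mpr ⟨Finset.mem_product.mpr ⟨hμ, hν⟩, rfl, hlevel.symm, hbad⟩⟩
  simp only [Finset.mem_filter, Finset.mem_product, and_imp, Prod.forall] at hS hmin
  obtain ⟨⟨hμ, hν⟩, hμL, hνL, hPμν⟩ := hS
  obtain ⟨α, hα, hmul⟩ := exists_coord_mul_inner_pos (R := R) (v := μ - ν)
    (sub_ne_zero.mpr fun h => hPμν (by rw [h]))
  have hααi : α ≠ αi := by
    rintro rfl
    rw [map_sub, hμL, hνL, sub_self, zero_mul] at hmul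
    exact hmul.false
  rw [map_sub, inner_sub_right, mul_sub] at hmul
  rcases lt_or_ge 0 ((R.coord α μ - R.coord α ν) * ⟪α, μ⟫) with h | h
  · obtain ⟨μ', hμ', hμ'L, hPμ', hlt⟩ :=
      exists_step_toward hαi hP hμ (hμL ▸ hpos) hν hα hααi h
    have := hmin μ' ν hμ' hν (hμ'L.trans hμL) hνL (by rwa [hPμ'])
    linarith
  · obtain ⟨ν', hν', hν'L, hPν', hlt⟩ :=
      exists_step_toward hαi hP hν (hνL ▸ hpos) hμ hα hααi (by linarith)
    have := hmin μ ν' hμ hν' hμL (hν'L.trans hνL) (by rwa [hPν'])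
    rw [coordDist_comm ν', coordDist_comm ν] at hlt
    linarith

/-- The ideals whose normalizer is the maximal parabolic `p(Π ∖ {αi})`. -/
def normalizerFibre (R : RootSystemData V) (αi : V) : Set (Finset V) :=
  {I | R.IsUpperIdeal I ∧ ∀ α ∈ R.Pi, (R.NegSimpleRootInNormalizer I α ↔ α ≠ αi)}

/-- `I_j = {μ ∈ Δ⁺ : [μ : αi] ≥ j}`. -/
def levelIdeal (R : RootSystemData V) (αi : V) (j : ℕ) : Finset V :=
  R.Δpos.filter fun μ => (j : ℝ) ≤ R.coord αi μ

theorem levelIdeal_antitone (αi : V) : Antitone (R.levelIdeal αi) := fun j k hjk μ hμ => by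
  simp only [levelIdeal, Finset.mem_filter] at hμ ⊢
  exact ⟨hμ.1, le_trans (by exact_mod_cast hjk) hμ.2⟩

theorem levelIdeal_strictAntiOn (hαi : αi ∈ R.Pi) {θ : V} (hθ : θ ∈ R.Δpos) {n : ℕ}
    (hn : R.coord αi θ = n) : StrictAntiOn (R.levelIdeal αi) (Set.Icc 1 n) := by
  intro j ⟨hj1, hjn⟩ k _ hjk
  refine (levelIdeal_antitone αi hjk.le).lt_of_ne fun heq => ?_
  obtain ⟨μ, hμ, hμj⟩ :=
    exists_mem_Δpos_coord_eq hαi hθ hj1 (by rw [hn]; exact_mod_cast hjn)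
  have hμk : μ ∈ R.levelIdeal αi k := heq ▸ Finset.mem_filter.mpr ⟨hμ, hμj.ge⟩
  have := (Finset.mem_filter.mp hμk).2
  rw [hμj, Nat.cast_le] at this
  omega

theorem levelIdeal_isUpperIdeal (αi : V) (j : ℕ) : R.IsUpperIdeal (R.levelIdeal αi j) := by
  refine ⟨Finset.filter_subset _ _, fun γ hγ μ hμ hadd => ?_⟩
  obtain ⟨hγ, hγj⟩ := Finset.mem_filter.mp hγ
  refine Finset.mem_filter.mpr ⟨add_mem_Δpos hγ hμ hadd, ?_⟩
  rw [map_add]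
  linarith [coord_nonneg hμ αi]

theorem negSimpleRootInNormalizer_levelIdeal_iff (hαi : αi ∈ R.Pi) {θ : V} (hθ : θ ∈ R.Δpos)
    {j : ℕ} (hj : 1 ≤ j) (hjθ : (j : ℝ) ≤ R.coord αi θ) {α : V} (hα : α ∈ R.Pi) :
    R.NegSimpleRootInNormalizer (R.levelIdeal αi j) α ↔ α ≠ αi := by
  have hj' : (1 : ℝ) ≤ j := by exact_mod_cast hj
  constructor
  · rintro ⟨hnot, hclosed⟩ rfl
    rcases hj.eq_or_lt with rfl | hj2
    · exact hnot (Finset.mem_filter.mpr ⟨R.Pi_subset hα, by rw [coord_self hα, Nat.cast_one]⟩)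
    obtain ⟨μ, hμ, hμj⟩ := exists_mem_Δpos_coord_eq hα hθ hj hjθ
    obtain ⟨μ', hμ', hμ'j, hsub⟩ := exists_sub_mem_Δpos_of_two_le_coord hα hμ
      (by rw [hμj]; exact_mod_cast hj2)
    have := (Finset.mem_filter.mp <| hclosed μ' (Finset.mem_filter.mpr ⟨hμ', (hμ'j.trans hμj).ge⟩)
      (R.Δpos_subset hsub)).2
    rw [map_sub, coord_self hα, hμ'j, hμj] at this
    linarith
  · intro hne
    have hαi_α : R.coord αi α = 0 := coord_of_ne hα hαi hne
    refine ⟨fun hmem => ?_, fun γ hγ hsub => ?_⟩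
    · have := (Finset.mem_filter.mp hmem).2
      rw [hαi_α] at this
      linarith
    · obtain ⟨-, hγj⟩ := Finset.mem_filter.mp hγ
      have hlevel : R.coord αi (γ - α) = R.coord αi γ := by rw [map_sub, hαi_α, sub_zero]
      exact Finset.mem_filter.mpr ⟨mem_Δpos_of_coord_pos hsub (by linarith), hlevel ▸ hγj⟩

theorem coord_pos_of_mem (hαi : αi ∈ R.Pi) {I : Finset V} (hI : I ⊆ R.Δpos)
    (hN : ∀ α ∈ R.Pi, α ≠ αi → R.NegSimpleRootInNormalizer I α) {γ : V} (hγ : γ ∈ I) :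
    0 < R.coord αi γ := by
  by_contra! hγ0
  obtain ⟨γ, hγS, hmin⟩ := (I.filter fun γ => R.coord αi γ ≤ 0).exists_min_image R.height
    ⟨γ, Finset.mem_filter.mpr ⟨hγ, hγ0⟩⟩
  obtain ⟨hγ, hγ0⟩ := Finset.mem_filter.mp hγS
  by_cases hγPi : γ ∈ R.Pi
  · refine (hN γ hγPi fun h => ?_).1 hγ
    rw [h, coord_self hαi] at hγ0
    linarith
  obtain ⟨α, hα, hsub⟩ := exists_sub_simple_mem_Δpos (hI hγ) hγPi
  have hααi : α ≠ αi := by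
    rintro rfl
    linarith [coord_nonneg hsub α, show R.coord α (γ - α) = R.coord α γ - 1 by
      rw [map_sub, coord_self hα]]
  have := hmin (γ - α) <| Finset.mem_filter.mpr ⟨(hN α hα hααi).2 γ hγ (R.Δpos_subset hsub),
    by rwa [map_sub, coord_of_ne hα hαi hααi, sub_zero]⟩
  rw [map_sub, height_simple hα] at this
  linarith

theorem levelIdeal_subset (hαi : αi ∈ R.Pi) {I : Finset V} (hI : R.IsUpperIdeal I)
    (hN : ∀ α ∈ R.Pi, α ≠ αi → R.NegSimpleRootInNormalizer I α) {γ : V} (hγ : γ ∈ I)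
    {j : ℕ} (hγj : R.coord αi γ = j) (hj : 1 ≤ j) : R.levelIdeal αi j ⊆ I := by
  have hP : ∀ α ∈ R.Pi, α ≠ αi → ∀ μ ∈ R.Δpos, μ + α ∈ R.Δ → (μ ∈ I ↔ μ + α ∈ I) :=
    fun α hα hααi μ hμ hadd => ⟨fun h => hI.2 μ h α (R.Pi_subset hα) hadd,
      fun h => by simpa using (hN α hα hααi).2 _ h (by simpa using R.Δpos_subset hμ)⟩
  have hj' : (1 : ℝ) ≤ j := by exact_mod_cast hj
  have key : ∀ k : ℕ, j ≤ k → ∀ μ ∈ R.Δpos, R.coord αi μ = k → μ ∈ I := by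
    intro k hk
    induction k, hk using Nat.le_induction with
    | base =>
      exact fun μ hμ hμj => (iff_of_coord_eq hαi hP hμ (hI.1 hγ) (hμj.trans hγj.symm)
        (by linarith)).2 hγ
    | succ k hk ih =>
      intro μ hμ hμk
      have hk' : (j : ℝ) ≤ k := by exact_mod_cast hk
      obtain ⟨μ', hμ', hμ'k, hsub⟩ :=
        exists_sub_mem_Δpos_of_two_le_coord hαi hμ (by rw [hμk]; push_cast; linarith)
      have hsubI := ih _ hsub (by rw [map_sub, coord_self hαi, hμ'k, hμk]; push_cast; ring)
      have hμ'I : μ' ∈ I := by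
        simpa using hI.2 _ hsubI αi (R.Pi_subset hαi) (by simpa using R.Δpos_subset hμ')
      exact (iff_of_coord_eq hαi hP hμ hμ' (hμ'k.symm) (by rw [hμk]; push_cast; linarith)).2
        hμ'I
  intro μ hμ
  obtain ⟨hμ, hμj⟩ := Finset.mem_filter.mp hμ
  obtain ⟨k, hk⟩ := exists_coord_eq_natCast hμ αi
  exact key k (by rw [hk] at hμj; exact_mod_cast hμj) μ hμ hk

theorem exists_eq_levelIdeal (hαi : αi ∈ R.Pi) {θ : V} (hθ : R.IsHighestRoot θ) {n : ℕ}
    (hn : R.coord αi θ = n) {I : Finset V} (hI : I ∈ R.normalizerFibre αi) :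
    ∃ j ∈ Set.Icc 1 n, R.levelIdeal αi j = I := by
  obtain ⟨hI, hnorm⟩ := hI
  have hN : ∀ α ∈ R.Pi, α ≠ αi → R.NegSimpleRootInNormalizer I α :=
    fun α hα => (hnorm α hα).2
  have hne : I.Nonempty := by
    rw [Finset.nonempty_iff_ne_empty]
    rintro rfl
    exact (hnorm αi hαi).1 ⟨Finset.notMem_empty αi, by simp⟩ rfl
  obtain ⟨γ, hγ, hmin⟩ := I.exists_min_image (R.coord αi) hne
  obtain ⟨j, hj⟩ := exists_coord_eq_natCast (hI.1 hγ) αi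
  have hj1 : 1 ≤ j := by
    have := coord_pos_of_mem hαi hI.1 hN hγ
    rw [hj] at this
    exact_mod_cast this
  have hjn : j ≤ n := by
    have := coord_le_of_isHighestRoot hθ (hI.1 hγ) hαi
    rw [hj, hn] at this
    exact_mod_cast this
  refine ⟨j, ⟨hj1, hjn⟩, (levelIdeal_subset hαi hI hN hγ hj hj1).antisymm fun μ hμ => ?_⟩
  exact Finset.mem_filter.mpr ⟨hI.1 hμ, hj ▸ hmin μ hμ⟩

theorem normalizerFibre_eq_image (hαi : αi ∈ R.Pi) {θ : V} (hθ : R.IsHighestRoot θ) {n : ℕ}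
    (hn : R.coord αi θ = n) : R.normalizerFibre αi = R.levelIdeal αi '' Set.Icc 1 n := by
  ext I
  refine ⟨exists_eq_levelIdeal hαi hθ hn, ?_⟩
  rintro ⟨j, ⟨hj1, hjn⟩, rfl⟩
  exact ⟨levelIdeal_isUpperIdeal αi j, fun α hα => negSimpleRootInNormalizer_levelIdeal_iff hαi
    hθ.1 hj1 (by rw [hn]; exact_mod_cast hjn) hα⟩

end RootSystemData

/-- Lemma 3.4.  Let `p_⟨i⟩ = p(Π \\ {α_i})` be a maximal standard
parabolic subalgebra and `θ = Σ n_j α_j` the highest root.  The set of ad-nilpotent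
ideals whose normalizer equals `p_⟨i⟩` (i.e. `g_{-α} ⊆ n_g(c)` exactly for the
simple roots `α ≠ α_i`), partially ordered by inclusion, is a chain of cardinality
`n_i`; explicitly, it consists of the ideals `I_j = {μ ∈ Δ⁺ : [μ : α_i] ≥ j}` for
`j = 1, …, n_i`.  Here `cf γ` gives the coordinates of a positive root `γ` in the
basis `Π` and `nc = cf θ` those of `θ`. -/
theorem fibre_over_maximal_parabolic_is_chain
    {V : Type*} [NormedAddCommGroup V] [InnerProductSpace ℝ V] [FiniteDimensional ℝ V]
    (R : RootSystemData V) (θ : V) (hθ : R.IsHighestRoot θ)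
    (αi : V) (hαi : αi ∈ R.Pi)
    (cf : V → V → ℕ) (hcf : ∀ γ ∈ R.Δpos, γ = ∑ α ∈ R.Pi, (cf γ α : ℝ) • α) :
    IsChain (· ⊆ ·)
      {I : Finset V | R.IsUpperIdeal I ∧
        ∀ α ∈ R.Pi, (R.NegSimpleRootInNormalizer I α ↔ α ≠ αi)} ∧
    {I : Finset V | R.IsUpperIdeal I ∧
        ∀ α ∈ R.Pi, (R.NegSimpleRootInNormalizer I α ↔ α ≠ αi)}.ncard = cf θ αi ∧
    {I : Finset V | R.IsUpperIdeal I ∧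
        ∀ α ∈ R.Pi, (R.NegSimpleRootInNormalizer I α ↔ α ≠ αi)} =
      {J : Finset V | ∃ j : ℕ, 1 ≤ j ∧ j ≤ cf θ αi ∧
        J = R.Δpos.filter fun μ => j ≤ cf μ αi} := by
  have hcoord : ∀ μ ∈ R.Δpos, R.coord αi μ = cf μ αi := fun μ hμ => by
    conv_lhs => rw [hcf μ hμ]
    exact R.coord_sum_smul hαi _
  have hlevel (j : ℕ) : R.levelIdeal αi j = R.Δpos.filter fun μ => j ≤ cf μ αi :=
    Finset.filter_congr fun μ hμ => by rw [hcoord μ hμ, Nat.cast_le]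
  change IsChain _ (R.normalizerFibre αi) ∧ (R.normalizerFibre αi).ncard = _ ∧
    R.normalizerFibre αi = _
  rw [R.normalizerFibre_eq_image hαi hθ (hcoord θ hθ.1)]
  refine ⟨(R.levelIdeal_antitone αi).isChain_image (isChain_of_trichotomous _), ?_, ?_⟩
  · rw [(R.levelIdeal_strictAntiOn hαi hθ.1 (hcoord θ hθ.1)).injOn.ncard_image,
      Set.ncard_Icc_nat, Nat.add_sub_cancel]
  · ext J
    simp [hlevel, and_assoc, eq_comm]
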